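/- Let G = K_p \ {1,2} be the complete graph on [p] with the single edge {1,2} removed, where p ≥ 3. Then CIM_G is a simplex of dimension 2^{p−2} − 1; equivalently, there are exactly 2^{p−2} Markov equivalence classes of DAGs with skeleton G and their characteristic imsets are affinely independent. -/

import Mathlib

open scoped Classical

/-- A directed acyclic graph on vertex set `Fin p`. -/
structure DAGraph (p : ℕ) where
  E : Fin p → Fin p → Prop
  acyclic : ∀ i, ¬ Relation.TransGen E i i

/-- The characteristic imset of a directed graph given by the relation `E`. -/
noncomputable def imsetRel {p : ℕ} (E : Fin p → Fin p → Prop) (S : Finset (Fin p)) : ℝ :=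
  if ∃ i ∈ S, ∀ j ∈ S, j ≠ i → E j i then 1 else 0

/-- The skeleton (underlying undirected graph) of a DAG. -/
def DAGraph.skeleton {p : ℕ} (G : DAGraph p) : SimpleGraph (Fin p) where
  Adj a b := G.E a b ∨ G.E b a
  symm := ⟨fun a b h => Or.symm h⟩
  loopless := ⟨fun a h =>
    h.elim (fun h' => G.acyclic a (Relation.TransGen.single h'))
      (fun h' => G.acyclic a (Relation.TransGen.single h'))⟩

/-- The characteristic imset of a DAG. -/
noncomputable def DAGraph.cim {p : ℕ} (G : DAGraph p) : Finset (Fin p) → ℝ := imsetRel G.E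

/-- `G.vStruct a b c` : `a → b ← c` is a v-structure (with `a`, `c` non-adjacent). -/
def DAGraph.vStruct {p : ℕ} (G : DAGraph p) (a b c : Fin p) : Prop :=
  a ≠ c ∧ G.E a b ∧ G.E c b ∧ ¬ G.skeleton.Adj a c

/-- The relation obtained from `E` by reversing the single edge `i → j`. -/
def reverseRel {p : ℕ} (E : Fin p → Fin p → Prop) (i j : Fin p) : Fin p → Fin p → Prop :=
  fun a b => (E a b ∧ ¬(a = i ∧ b = j)) ∨ (a = j ∧ b = i)

/-- The complete graph on `Fin p` with the single edge between vertices `0` and `1`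
(i.e. vertices `1` and `2` in one-based notation) removed. -/
def completeMinus (p : ℕ) : SimpleGraph (Fin p) where
  Adj a b := a ≠ b ∧ ¬(((a : ℕ) = 0 ∧ (b : ℕ) = 1) ∨ ((a : ℕ) = 1 ∧ (b : ℕ) = 0))
  symm := by
    constructor
    rintro a b ⟨h1, h2⟩
    exact ⟨h1.symm, by tauto⟩
  loopless := ⟨fun a h => h.1 rfl⟩

/-! With skeleton `K_p ∖ {1,2}`, the characteristic imset of a DAG takes value `1` on `S` exactly
when `S` has a sink. Every clique of a DAG has one, so the imset is determined by the set `C` of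
colliders `1 → c ← 2`, and every `C` among the other `p - 2` vertices occurs. On
`S = {1, 2} ∪ T` the imset is `1` unless `T` misses `C`; hence an affine dependence `∑ w_C • f_C`
gives `∑_{C ⊆ U} w_C = 0` for every `U`, and these unitriangular equations force `w = 0`. -/

open Relation

theorem exists_sink_of_acyclic {α : Type*} [Finite α] {E : α → α → Prop}
    (hE : ∀ a, ¬ TransGen E a a) {S : Set α} (hS : S.Nonempty)
    (htot : S.Pairwise fun a b => E a b ∨ E b a) : ∃ m ∈ S, ∀ j ∈ S, j ≠ m → E j m := by
  have : IsTrans α (flip (TransGen E)) := ⟨fun _ _ _ hab hbc => hbc.trans hab⟩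
  have : Std.Irrefl (flip (TransGen E)) := ⟨hE⟩
  obtain ⟨m, hm, hmax⟩ := (Finite.wellFounded_of_trans_of_irrefl (flip (TransGen E))).has_min S hS
  exact ⟨m, hm, fun j hj hjm => (htot hj hm hjm).resolve_right fun h => hmax j hj (.single h)⟩

theorem Finset.eq_zero_of_sum_filter_subset_eq_zero {α M : Type*} [AddCommMonoid M]
    (s : Finset (Finset α)) (w : Finset α → M) (h : ∀ U, ∑ C ∈ s with C ⊆ U, w C = 0) :
    ∀ C ∈ s, w C = 0 := by
  intro C
  induction C using Finset.strongInduction with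
  | _ C ih =>
    intro hC
    rw [← h C, Finset.sum_eq_single_of_mem C (by simp [hC])]
    intro B hB hBC
    rw [Finset.mem_filter] at hB
    exact ih B (hB.2.ssubset_of_ne hBC) hB.1

namespace DAGraph

variable {p : ℕ}

theorem exists_sink_of_isClique (D : DAGraph p) {S : Finset (Fin p)} (hS : S.Nonempty)
    (hclique : D.skeleton.IsClique S) : ∃ m ∈ S, ∀ j ∈ S, j ≠ m → D.E j m :=
  exists_sink_of_acyclic D.acyclic hS hclique

theorem E_of_E_of_adj (D : DAGraph p) {a c m : Fin p} (hac : D.E a c) (hcm : c = m ∨ D.E c m)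
    (ham : D.skeleton.Adj a m) : D.E a m := by
  rcases hcm with rfl | hcm
  · exact hac
  · exact ham.resolve_right fun hma => D.acyclic a (((TransGen.single hac).tail hcm).tail hma)

def ofRank {α : Type*} [Preorder α] (G : SimpleGraph (Fin p)) (r : Fin p → α) : DAGraph p where
  E a b := G.Adj a b ∧ r a < r b
  acyclic a h := lt_irrefl (r a) (transGen_eq_self.le _ _ (h.lift r fun _ _ h => h.2))

theorem skeleton_ofRank {α : Type*} [LinearOrder α] (G : SimpleGraph (Fin p)) {r : Fin p → α}
    (hr : Function.Injective r) : (ofRank G r).skeleton = G := by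
  ext a b
  refine ⟨fun h => h.elim (·.1) (·.1.symm), fun h => ?_⟩
  rcases (hr.ne h.ne).lt_or_gt with hlt | hlt
  · exact .inl ⟨h, hlt⟩
  · exact .inr ⟨h.symm, hlt⟩

end DAGraph

section CompleteMinus

variable {n : ℕ}

theorem completeMinus_adj {a b : Fin (n + 2)} :
    (completeMinus (n + 2)).Adj a b ↔ a ≠ b ∧ ¬(a = 0 ∧ b = 1) ∧ ¬(a = 1 ∧ b = 0) := by
  simp only [completeMinus, Fin.ext_iff, Fin.val_zero, Fin.val_one, not_or]

/-- Vertices `0` and `1` are the paper's `1` and `2`; the others are written `c.succ.succ`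
with `c : Fin n`. -/
noncomputable def DAGraph.colliders (D : DAGraph (n + 2)) : Finset (Fin n) :=
  {c | D.E 0 c.succ.succ ∧ D.E 1 c.succ.succ}

noncomputable def colliderImset (C : Finset (Fin n)) (S : Finset (Fin (n + 2))) : ℝ :=
  if S.Nonempty ∧ (0 ∈ S → 1 ∈ S → ∃ c ∈ C, c.succ.succ ∈ S) then 1 else 0

theorem Fin.eq_zero_or_eq_one_or_eq_succ_succ (v : Fin (n + 2)) :
    v = 0 ∨ v = 1 ∨ ∃ c : Fin n, v = c.succ.succ := by
  rcases Fin.eq_zero_or_eq_succ v with rfl | ⟨v, rfl⟩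
  · exact .inl rfl
  rcases Fin.eq_zero_or_eq_succ v with rfl | ⟨c, rfl⟩
  · exact .inr (.inl rfl)
  · exact .inr (.inr ⟨c, rfl⟩)

namespace DAGraph

variable {D : DAGraph (n + 2)} (hD : D.skeleton = completeMinus (n + 2))
include hD

theorem exists_sink_iff_of_skeleton_eq_completeMinus (S : Finset (Fin (n + 2))) :
    (∃ i ∈ S, ∀ j ∈ S, j ≠ i → D.E j i) ↔
      S.Nonempty ∧ (0 ∈ S → 1 ∈ S → ∃ c ∈ D.colliders, c.succ.succ ∈ S) := by
  have hadj : ∀ a b, D.skeleton.Adj a b ↔ a ≠ b ∧ ¬(a = 0 ∧ b = 1) ∧ ¬(a = 1 ∧ b = 0) := by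
    intro a b
    rw [hD, completeMinus_adj]
  have h01 : ¬ D.E 0 1 := fun h => ((hadj 0 1).1 (.inl h)).2.1 ⟨rfl, rfl⟩
  have h10 : ¬ D.E 1 0 := fun h => ((hadj 1 0).1 (.inl h)).2.2 ⟨rfl, rfl⟩
  constructor
  · rintro ⟨i, hi, hsink⟩
    refine ⟨⟨i, hi⟩, fun h0 h1 => ?_⟩
    rcases Fin.eq_zero_or_eq_one_or_eq_succ_succ i with rfl | rfl | ⟨c, rfl⟩
    · exact absurd (hsink 1 h1 one_ne_zero) h10
    · exact absurd (hsink 0 h0 zero_ne_one) h01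
    · refine ⟨c, ?_, hi⟩
      simp only [colliders, Finset.mem_filter, Finset.mem_univ, true_and]
      exact ⟨hsink 0 h0 (Fin.succ_ne_zero _).symm, hsink 1 h1 (Fin.succ_succ_ne_one _).symm⟩
  rintro ⟨hS, hcoll⟩
  by_cases h01S : 0 ∈ S ∧ 1 ∈ S
  swap
  · refine D.exists_sink_of_isClique hS fun a ha b hb hab => (hadj a b).2 ⟨hab, ?_, ?_⟩
    · rintro ⟨rfl, rfl⟩
      exact h01S ⟨ha, hb⟩
    · rintro ⟨rfl, rfl⟩
      exact h01S ⟨hb, ha⟩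
  obtain ⟨c, hc, hcS⟩ := hcoll h01S.1 h01S.2
  simp only [colliders, Finset.mem_filter, Finset.mem_univ, true_and] at hc
  set M := S \ {0, 1}
  have hcM : c.succ.succ ∈ M := by simp [M, hcS, Fin.succ_ne_zero, Fin.succ_succ_ne_one]
  have hclique : D.skeleton.IsClique (M : Set (Fin (n + 2))) := by
    intro a ha b hb hab
    simp only [M, Finset.coe_sdiff, Set.mem_sdiff, Finset.mem_coe, Finset.coe_insert,
      Finset.coe_singleton, Set.mem_insert_iff, Set.mem_singleton_iff, not_or] at ha hb
    exact (hadj a b).2 ⟨hab, fun h => ha.2.1 h.1, fun h => ha.2.2 h.1⟩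
  obtain ⟨m, hmM, hsink⟩ := D.exists_sink_of_isClique ⟨_, hcM⟩ hclique
  simp only [M, Finset.mem_sdiff, Finset.mem_insert, Finset.mem_singleton, not_or] at hmM
  obtain ⟨hmS, hm0, hm1⟩ := hmM
  -- `0` and `1` point into the collider `c`, hence, by acyclicity, into the sink `m` of `M`.
  have hto : ∀ u, (u = 0 ∨ u = 1) → D.E u c.succ.succ → D.E u m := by
    refine fun u hu huc => D.E_of_E_of_adj huc ((eq_or_ne _ _).imp_right (hsink _ hcM))
      ((hadj u m).2 ⟨?_, fun h => hm1 h.2, fun h => hm0 h.2⟩)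
    rintro rfl
    rcases hu with rfl | rfl <;> contradiction
  refine ⟨m, hmS, fun j hj hjm => ?_⟩
  by_cases hj0 : j = 0
  · exact hj0 ▸ hto 0 (.inl rfl) hc.1
  by_cases hj1 : j = 1
  · exact hj1 ▸ hto 1 (.inr rfl) hc.2
  exact hsink j (by simp [M, hj, hj0, hj1]) hjm

theorem cim_eq_colliderImset : D.cim = colliderImset D.colliders := by
  funext S
  simp only [cim, imsetRel, colliderImset, exists_sink_iff_of_skeleton_eq_completeMinus hD]

end DAGraph

/-- Orders the vertices as: non-colliders, `0`, `1`, colliders `C`, ties broken by the vertex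
itself. -/
def colliderRank (C : Finset (Fin n)) (v : Fin (n + 2)) : ℕ ×ₗ Fin (n + 2) :=
  toLex ((Fin.cons 1 (Fin.cons 2 fun c => if c ∈ C then 3 else 0) : Fin (n + 2) → ℕ) v, v)

theorem colliderRank_injective (C : Finset (Fin n)) : Function.Injective (colliderRank C) :=
  fun _ _ h => congrArg (fun x => (ofLex x).2) h

def colliderDAG (C : Finset (Fin n)) : DAGraph (n + 2) :=
  .ofRank (completeMinus (n + 2)) (colliderRank C)

theorem skeleton_colliderDAG (C : Finset (Fin n)) :
    (colliderDAG C).skeleton = completeMinus (n + 2) :=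
  DAGraph.skeleton_ofRank _ (colliderRank_injective C)

theorem colliders_colliderDAG (C : Finset (Fin n)) : (colliderDAG C).colliders = C := by
  ext c
  by_cases hc : c ∈ C <;>
    simp [hc, DAGraph.colliders, colliderDAG, DAGraph.ofRank, colliderRank,
      Prod.Lex.toLex_lt_toLex, completeMinus_adj, (Fin.succ_ne_zero _).symm,
      Fin.succ_succ_ne_one, (Fin.succ_succ_ne_one _).symm]

theorem colliderImset_insert_zero_insert_one (C T : Finset (Fin n)) :
    colliderImset C (insert 0 (insert 1 (T.image fun c => c.succ.succ))) =
      if Disjoint C T then 0 else 1 := by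
  have hcoll : (∃ c ∈ C, c.succ.succ ∈ insert 0 (insert 1 (T.image fun c => c.succ.succ))) ↔
      ¬ Disjoint C T := by
    simp [Finset.not_disjoint_iff, Fin.succ_ne_zero, Fin.succ_succ_ne_one]
  simp only [colliderImset, hcoll]
  split_ifs <;> simp_all

theorem affineIndependent_colliderImset : AffineIndependent ℝ (colliderImset (n := n)) := by
  rw [affineIndependent_iff]
  intro s w hw hws
  refine Finset.eq_zero_of_sum_filter_subset_eq_zero s w fun U => ?_
  have hU := congrFun hws (insert 0 (insert 1 (Uᶜ.image fun c => c.succ.succ)))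
  simp only [Finset.sum_apply, Pi.smul_apply, colliderImset_insert_zero_insert_one,
    disjoint_compl_right_iff, smul_eq_mul, mul_ite, mul_zero, mul_one,
    Pi.zero_apply] at hU
  rw [Finset.sum_ite, Finset.sum_const_zero, zero_add] at hU
  rw [← Finset.sum_filter_add_sum_filter_not s (· ⊆ U) w, hU, add_zero] at hw
  convert hw

end CompleteMinus

/-- For `G = K_p` minus the edge `{1,2}` with `p ≥ 3`, `CIM_G` is a
simplex of dimension `2^{p−2} − 1`: there are exactly `2^{p−2}` Markov equivalence classes
of DAGs with skeleton `G` and their characteristic imsets are affinely independent. -/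
theorem stmt15 (p : ℕ) (hp : 3 ≤ p)
    (V : Set (Finset (Fin p) → ℝ))
    (hV : V = {x | ∃ D : DAGraph p, D.skeleton = completeMinus p ∧ x = D.cim}) :
    V.ncard = 2 ^ (p - 2) ∧
      AffineIndependent ℝ ((↑) : V → (Finset (Fin p) → ℝ)) := by
  obtain ⟨n, rfl⟩ : ∃ n, p = n + 2 := ⟨p - 2, by omega⟩
  have hrange : V = Set.range (colliderImset (n := n)) := by
    rw [hV]
    ext x
    constructor
    · rintro ⟨D, hD, rfl⟩
      exact ⟨D.colliders, (D.cim_eq_colliderImset hD).symm⟩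
    · rintro ⟨C, rfl⟩
      refine ⟨colliderDAG C, skeleton_colliderDAG C, ?_⟩
      rw [DAGraph.cim_eq_colliderImset (skeleton_colliderDAG C), colliders_colliderDAG]
  subst hrange
  have hind := affineIndependent_colliderImset (n := n)
  refine ⟨?_, hind.range⟩
  rw [Set.ncard_range_of_injective hind.injective, Nat.card_eq_fintype_card, Fintype.card_finset,
    Fintype.card_fin, Nat.add_sub_cancel]
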